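/- Let (N, m0, l, A) be a labeled Petri net system with transitions partitioned into explicit transitions T_E and implicit transitions T_I such that the T_I-induced subnet is acyclic, and let G be its basis reachability graph. For every σ ∈ L(G), there exists a firing sequence s ∈ L(N, m0) with P_E(s) = φ(σ) and π(P_I(s)) = φ'(σ). -/

import Mathlib

open scoped BigOperators

/-- A Petri net on places `P` and transitions `T`, given by its `Pre` and `Post` matrices. -/
structure PetriNet (P T : Type) where
  Pre : P → T → ℕ
  Post : P → T → ℕ

namespace PetriNet

variable {P T A : Type}

/-- Incidence matrix `[N] = Post - Pre` (with values in ℤ). -/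
def inc (N : PetriNet P T) (p : P) (t : T) : ℤ :=
  (N.Post p t : ℤ) - (N.Pre p t : ℤ)

/-- Transition `t` is enabled at marking `m`. -/
def enabled (N : PetriNet P T) (m : P → ℕ) (t : T) : Prop :=
  ∀ p, N.Pre p t ≤ m p

/-- Marking obtained by firing `t` at `m`. -/
def fire (N : PetriNet P T) (m : P → ℕ) (t : T) : P → ℕ :=
  fun p => m p - N.Pre p t + N.Post p t

/-- `FireSeq N m s m'` means the sequence `s` is enabled at `m` and its firing yields `m'`,
written `m[s⟩m'`. -/
inductive FireSeq (N : PetriNet P T) : (P → ℕ) → List T → (P → ℕ) → Prop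
  | nil (m : P → ℕ) : FireSeq N m [] m
  | cons {m m' : P → ℕ} {t : T} {s : List T} :
      N.enabled m t → FireSeq N (N.fire m t) s m' → FireSeq N m (t :: s) m'

/-- `L(N, m0)`: the set of firing sequences enabled at `m0`. -/
def lang (N : PetriNet P T) (m0 : P → ℕ) : Set (List T) :=
  {s | ∃ m', N.FireSeq m0 s m'}

/-- `R(N, m0)`: the set of markings reachable from `m0`. -/
def reach (N : PetriNet P T) (m0 : P → ℕ) : Set (P → ℕ) :=
  {m | ∃ s, N.FireSeq m0 s m}

/-- A Petri net system is bounded if reachable markings are uniformly bounded. -/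
def Bounded (N : PetriNet P T) (m0 : P → ℕ) : Prop :=
  ∃ k : ℕ, ∀ m ∈ N.reach m0, ∀ p, m p ≤ k

/-- The `TL`-induced subnet: same places, transitions restricted to `TL`. -/
def restrict (N : PetriNet P T) (TL : Set T) : PetriNet P {t // t ∈ TL} where
  Pre := fun p t => N.Pre p t.1
  Post := fun p t => N.Post p t.1

/-- Parikh vector of a sequence. -/
def parikh [DecidableEq T] (s : List T) : T → ℕ := fun t => s.count t

/-- Projection of a sequence onto a subset `TL` of transitions (erasing the others). -/
def projSeq (TL : Set T) [DecidablePred (· ∈ TL)] (s : List T) : List T :=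
  s.filter (fun t => decide (t ∈ TL))

/-- Σ(m,t): explanations of `t` at `m`, i.e. sequences of implicit (`TI`) transitions whose
firing at `m` enables `t`. -/
def explanations (N : PetriNet P T) (TI : Set T) (m : P → ℕ) (t : T) : Set (List T) :=
  {s | (∀ u ∈ s, u ∈ TI) ∧ ∃ m', N.FireSeq m s m' ∧ N.enabled m' t}

/-- Y(m,t): e-vectors, Parikh vectors of explanations. -/
def eVectors [DecidableEq T] (N : PetriNet P T) (TI : Set T) (m : P → ℕ) (t : T) :
    Set (T → ℕ) :=
  parikh '' N.explanations TI m t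

/-- Y_min(m,t): componentwise-minimal e-vectors. -/
def eVectorsMin [DecidableEq T] (N : PetriNet P T) (TI : Set T) (m : P → ℕ) (t : T) :
    Set (T → ℕ) :=
  {y ∈ N.eVectors TI m t | ∀ y' ∈ N.eVectors TI m t, y' ≤ y → y' = y}

/-- Σ_min(m,t): explanations with no explanation of strictly smaller Parikh vector. -/
def explanationsMin [DecidableEq T] (N : PetriNet P T) (TI : Set T) (m : P → ℕ) (t : T) :
    Set (List T) :=
  {s ∈ N.explanations TI m t |
    ¬ ∃ s' ∈ N.explanations TI m t, parikh s' ≤ parikh s ∧ parikh s' ≠ parikh s}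

/-- Paths of the basis reachability graph: `(m,(t,y),m')` is an arc whenever `t ∈ TE`,
`y ∈ Y_min(m,t)` and `m' = m + [N]_I·y + [N](·,t)` (the vector `y` is supported on `TI`,
so the sum over all transitions equals the sum over `TI`). -/
inductive BrgPath [DecidableEq T] [Fintype T] (N : PetriNet P T) (TE TI : Set T) :
    (P → ℕ) → List (T × (T → ℕ)) → (P → ℕ) → Prop
  | nil (m : P → ℕ) : BrgPath N TE TI m [] m
  | cons {m m' m'' : P → ℕ} {t : T} {y : T → ℕ} {σ : List (T × (T → ℕ))} :
      t ∈ TE → y ∈ N.eVectorsMin TI m t →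
      (∀ p, (m' p : ℤ) = (m p : ℤ) + (∑ u, (y u : ℤ) * N.inc p u) + N.inc p t) →
      BrgPath N TE TI m' σ m'' → BrgPath N TE TI m ((t, y) :: σ) m''

/-- `L(G)`: the language of the basis reachability graph. -/
def brgLang [DecidableEq T] [Fintype T] (N : PetriNet P T) (TE TI : Set T) (m0 : P → ℕ) :
    Set (List (T × (T → ℕ))) :=
  {σ | ∃ m', BrgPath N TE TI m0 σ m'}

/-- The set of basis markings: states of the BRG reachable from `m0`. -/
def brgStates [DecidableEq T] [Fintype T] (N : PetriNet P T) (TE TI : Set T) (m0 : P → ℕ) :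
    Set (P → ℕ) :=
  {m | ∃ σ, BrgPath N TE TI m0 σ m}

/-- φ(σ): concatenation of the first entries of the arcs of σ. -/
def phi (σ : List (T × (T → ℕ))) : List T := σ.map Prod.fst

/-- φ'(σ): sum of the second entries of the arcs of σ. -/
def phi' (σ : List (T × (T → ℕ))) : T → ℕ := (σ.map Prod.snd).sum

/-- Arcs of the directed bipartite graph of the `TI`-induced subnet on `P ⊕ T`. -/
def subnetArc (N : PetriNet P T) (TI : Set T) : (P ⊕ T) → (P ⊕ T) → Prop
  | Sum.inl p, Sum.inr t => t ∈ TI ∧ 0 < N.Pre p t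
  | Sum.inr t, Sum.inl p => t ∈ TI ∧ 0 < N.Post p t
  | _, _ => False

/-- The `TI`-induced subnet is acyclic: no cycle in its directed bipartite graph. -/
def SubnetAcyclic (N : PetriNet P T) (TI : Set T) : Prop :=
  ∀ x : P ⊕ T, ¬ Relation.TransGen (N.subnetArc TI) x x

/-- `L(N_L, m0)` viewed as a set of sequences over `T` (via the inclusion `T_L ↪ T`). -/
def lowLang (N : PetriNet P T) (TL : Set T) (m0 : P → ℕ) : Set (List T) :=
  (fun s => s.map Subtype.val) '' (N.restrict TL).lang m0

/-- `l_L(L(N_L, m0))`: the label language of the low-level subnet system. -/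
def lowLabelLang (N : PetriNet P T) (l : T → A) (TL : Set T) (m0 : P → ℕ) : Set (List A) :=
  (fun s => s.map fun t => l t.1) '' (N.restrict TL).lang m0

/-- SNNI: `l(P_L(L(N,m0))) = l_L(L(N_L,m0))`, where `T_L = {t | l t ∈ A_L}`. -/
def SNNI (N : PetriNet P T) (m0 : P → ℕ) (l : T → A) (AL : Set A)
    [DecidablePred fun t => l t ∈ AL] : Prop :=
  (fun s => (s.filter fun t => decide (l t ∈ AL)).map l) '' N.lang m0 =
    N.lowLabelLang l {t | l t ∈ AL} m0

end PetriNet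

/-!
Each arc `(m, (t, y), m')` of the basis reachability graph comes with an explanation: a sequence
of implicit transitions with Parikh vector `y` that fires from `m` and enables `t`. By the state
equation, firing that explanation followed by `t` reaches exactly `m' = m + [N]_I·y + [N](·,t)`,
so concatenating these pieces along a path of the graph gives a firing sequence of the net whose
explicit part is `φ(σ)` and whose implicit part has Parikh vector `φ'(σ)`.
-/

namespace PetriNet

variable {P T : Type}

theorem FireSeq.append {N : PetriNet P T} {m m₁ m₂ : P → ℕ} {s s' : List T}
    (h : N.FireSeq m s m₁) (h' : N.FireSeq m₁ s' m₂) : N.FireSeq m (s ++ s') m₂ := by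
  induction h with
  | nil => exact h'
  | cons he _ ih => exact FireSeq.cons he (ih h')

theorem fire_apply_cast {N : PetriNet P T} {m : P → ℕ} {t : T} (he : N.enabled m t) (p : P) :
    (N.fire m t p : ℤ) = m p + N.inc p t := by
  simp only [fire, inc]
  push_cast [Nat.cast_sub (he p)]
  ring

section Projection

variable (TL : Set T) [DecidablePred (· ∈ TL)]

theorem projSeq_append (s s' : List T) :
    projSeq TL (s ++ s') = projSeq TL s ++ projSeq TL s' :=
  List.filter_append s s'

variable {TL}

theorem projSeq_cons_of_mem {t : T} (ht : t ∈ TL) (s : List T) :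
    projSeq TL (t :: s) = t :: projSeq TL s :=
  List.filter_cons_of_pos (by simpa using ht)

theorem projSeq_cons_of_not_mem {t : T} (ht : t ∉ TL) (s : List T) :
    projSeq TL (t :: s) = projSeq TL s :=
  List.filter_cons_of_neg (by simpa using ht)

end Projection

section Parikh

variable [DecidableEq T]

@[simp]
theorem parikh_nil : parikh ([] : List T) = 0 := rfl

theorem parikh_cons (t : T) (s : List T) : parikh (t :: s) = parikh s + Pi.single t 1 := by
  funext u
  by_cases hu : u = t
  · subst hu; simp [parikh]
  · simp [parikh, hu, Ne.symm hu]

theorem parikh_append (s s' : List T) : parikh (s ++ s') = parikh s + parikh s' := by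
  funext u
  simp [parikh, List.count_append]

variable [Fintype T]

theorem FireSeq.state_equation {N : PetriNet P T} {m m' : P → ℕ} {s : List T}
    (h : N.FireSeq m s m') (p : P) :
    (m' p : ℤ) = m p + ∑ u, (parikh s u : ℤ) * N.inc p u := by
  induction h with
  | nil => simp
  | @cons m _ t s he _ ih =>
    rw [ih, fire_apply_cast he, parikh_cons]
    simp only [Pi.add_apply, Pi.single_apply, Nat.cast_add, Nat.cast_ite, Nat.cast_one,
      CharP.cast_eq_zero, add_mul, ite_mul, one_mul, zero_mul, Finset.sum_add_distrib,
      Finset.sum_ite_eq', Finset.mem_univ, if_true]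
    ring

theorem exists_fireSeq_of_mem_eVectors {N : PetriNet P T} {TI : Set T} {m m' : P → ℕ} {t : T}
    {y : T → ℕ} (hy : y ∈ N.eVectors TI m t)
    (hm' : ∀ p, (m' p : ℤ) = m p + (∑ u, (y u : ℤ) * N.inc p u) + N.inc p t) :
    ∃ s, (∀ u ∈ s, u ∈ TI) ∧ parikh s = y ∧ N.FireSeq m (s ++ [t]) m' := by
  obtain ⟨s, ⟨hsTI, m₁, hs, hen⟩, rfl⟩ := hy
  have hfire : N.fire m₁ t = m' := by
    funext p
    have := hm' p
    rw [← hs.state_equation p, ← fire_apply_cast hen] at this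
    exact_mod_cast this.symm
  exact ⟨s, hsTI, rfl, hs.append (.cons hen (hfire ▸ .nil _))⟩

theorem BrgPath.exists_fireSeq {N : PetriNet P T} {TE TI : Set T}
    [DecidablePred (· ∈ TE)] [DecidablePred (· ∈ TI)] (hdisj : Disjoint TE TI)
    {m m' : P → ℕ} {σ : List (T × (T → ℕ))} (h : N.BrgPath TE TI m σ m') :
    ∃ s, N.FireSeq m s m' ∧ projSeq TE s = phi σ ∧ parikh (projSeq TI s) = phi' σ := by
  induction h with
  | nil m => exact ⟨[], .nil m, rfl, parikh_nil⟩
  | @cons m m₁ _ t y σ htE hy hm₁ _ ih =>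
    obtain ⟨s, hsTI, rfl, hs⟩ := exists_fireSeq_of_mem_eVectors hy.1 hm₁
    obtain ⟨s', hs', hE, hI⟩ := ih
    have htI : t ∉ TI := Set.disjoint_left.mp hdisj htE
    have hsE : projSeq TE s = [] :=
      List.filter_eq_nil_iff.mpr fun u hu => by
        simpa using Set.disjoint_right.mp hdisj (hsTI u hu)
    have hsI : projSeq TI s = s :=
      List.filter_eq_self.mpr fun u hu => by simpa using hsTI u hu
    refine ⟨s ++ t :: s', by simpa using hs.append hs', ?_, ?_⟩
    · rw [projSeq_append, projSeq_cons_of_mem htE, hsE, hE]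
      rfl
    · rw [projSeq_append, projSeq_cons_of_not_mem htI, parikh_append, hsI, hI]
      simp [phi']

end Parikh

end PetriNet

theorem brg_sequence_realizable_general
    {P T : Type} [Fintype T] [DecidableEq T]
    (N : PetriNet P T) (m0 : P → ℕ) (TE TI : Set T)
    [DecidablePred (· ∈ TE)] [DecidablePred (· ∈ TI)]
    (hdisj : Disjoint TE TI) :
    ∀ σ ∈ N.brgLang TE TI m0,
      ∃ s ∈ N.lang m0,
        PetriNet.projSeq TE s = PetriNet.phi σ ∧
          PetriNet.parikh (PetriNet.projSeq TI s) = PetriNet.phi' σ := by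
  rintro σ ⟨m', hσ⟩
  obtain ⟨s, hs, hE, hI⟩ := hσ.exists_fireSeq hdisj
  exact ⟨s, ⟨m', hs⟩, hE, hI⟩

/-- if the `T_I`-induced subnet is acyclic, every `σ ∈ L(G)` is realized by a
firing sequence `s ∈ L(N, m0)` with `P_E(s) = φ(σ)` and `π(P_I(s)) = φ'(σ)`. -/
theorem brg_sequence_realizable
    {P T A : Type} [Fintype T] [DecidableEq T]
    (N : PetriNet P T) (m0 : P → ℕ) (l : T → A) (TE TI : Set T)
    [DecidablePred (· ∈ TE)] [DecidablePred (· ∈ TI)]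
    (hcover : TE ∪ TI = Set.univ) (hdisj : Disjoint TE TI)
    (hacyc : N.SubnetAcyclic TI) :
    ∀ σ ∈ N.brgLang TE TI m0,
      ∃ s ∈ N.lang m0,
        PetriNet.projSeq TE s = PetriNet.phi σ ∧
          PetriNet.parikh (PetriNet.projSeq TI s) = PetriNet.phi' σ :=
  brg_sequence_realizable_general N m0 TE TI hdisj
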